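/- For a finite partition 𝔱 = {t_k}_{k=0}^K ∈ 𝒵, u ∈ U^p and v ∈ V^{p'} with 1/p + 1/p' = 1, the pairing B_𝔱(u,v) = Σ_{k=1}^K ⟨u(t_{k−1}), v(t_k) − v(t_{k−1})⟩ satisfies |B_𝔱(u,v)| ≤ ‖u‖_{U^p} ‖v‖_{V^{p'}}. -/

import Mathlib

noncomputable section

open MeasureTheory Filter

/-- A finite partition `−∞ < t₀ < t₁ < … < t_K ≤ ∞` (the last point may be `∞`). -/
structure Ptn where
  K : ℕ
  hK : 0 < K
  t : Fin (K + 1) → EReal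
  mono : StrictMono t
  h0 : t 0 ≠ ⊥

variable {H : Type*} [NormedAddCommGroup H] [InnerProductSpace ℝ H]

/-- Evaluation of `v : ℝ → H` at an extended real point, with the convention `v(∞) = 0`. -/
def evalE (v : ℝ → H) (x : EReal) : H := if x = ⊤ then 0 else v x.toReal

/-- A `U^p`-atom: a step function `a = ∑_{k=1}^K χ_{[t_{k−1},t_k)} φ_{k−1}` over a finite
partition, with `φ₀ = 0` and `∑_{k=0}^{K−1} ‖φ_k‖^p = 1`. -/
def IsUpAtom (p : ℝ) (a : ℝ → H) : Prop :=
  ∃ (P : Ptn) (φ : Fin P.K → H),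
    φ ⟨0, P.hK⟩ = 0 ∧ (∑ k, ‖φ k‖ ^ p) = 1 ∧
    ∀ x : ℝ, a x = ∑ k : Fin P.K,
      Set.indicator {y : ℝ | P.t k.castSucc ≤ (y : EReal) ∧ (y : EReal) < P.t k.succ}
        (fun _ => φ k) x

/-- An atomic decomposition `u = ∑_j c_j a_j` with `U^p`-atoms `a_j` and `∑ |c_j| < ∞`. -/
def UpHasDecomp (p : ℝ) (u : ℝ → H) (c : ℕ → ℝ) (a : ℕ → ℝ → H) : Prop :=
  (∀ j, IsUpAtom p (a j)) ∧ Summable (fun j => |c j|) ∧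
    ∀ x : ℝ, HasSum (fun j => c j • a j x) (u x)

/-- Membership in the atomic space `U^p`. -/
def MemUp (p : ℝ) (u : ℝ → H) : Prop := ∃ c a, UpHasDecomp p u c a

/-- The `U^p` norm: infimum of `∑ |c_j|` over all atomic decompositions. -/
def UpNorm (p : ℝ) (u : ℝ → H) : ℝ :=
  sInf {S | ∃ c a, UpHasDecomp p u c a ∧ S = ∑' j, |c j|}

/-- The `p`-variation sum of `v` along the partition `P`, with `v(∞) := 0`. -/
def VpSum (p : ℝ) (v : ℝ → H) (P : Ptn) : ℝ :=
  (∑ k : Fin P.K, ‖evalE v (P.t k.succ) - evalE v (P.t k.castSucc)‖ ^ p) ^ (1 / p)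

/-- Membership in `V^p`: the limits at `±∞` exist and the `p`-variation is finite. -/
def MemVp (p : ℝ) (v : ℝ → H) : Prop :=
  (∃ L, Tendsto v atTop (nhds L)) ∧ (∃ L, Tendsto v atBot (nhds L)) ∧
    BddAbove {r | ∃ P : Ptn, r = VpSum p v P}

/-- The `V^p` norm: supremum of the `p`-variation sums over all finite partitions. -/
def VpNorm (p : ℝ) (v : ℝ → H) : ℝ := sSup {r | ∃ P : Ptn, r = VpSum p v P}

/-- The pairing `B_𝔱(u,v) = ∑_{k=1}^K ⟨u(t_{k−1}), v(t_k) − v(t_{k−1})⟩`. -/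
def Bsum (u v : ℝ → H) (P : Ptn) : ℝ :=
  ∑ k : Fin P.K,
    (inner ℝ (evalE u (P.t k.castSucc)) (evalE v (P.t k.succ) - evalE v (P.t k.castSucc)) : ℝ)

/-- `b` is the limit of the partition sums `B_𝔱(u,v)` along refinements. -/
def IsBLimit (u v : ℝ → H) (b : ℝ) : Prop :=
  ∀ ε : ℝ, 0 < ε → ∃ P : Ptn, ∀ Q : Ptn, Set.range P.t ⊆ Set.range Q.t →
    |Bsum u v Q - b| < ε

end

/-!
The pairing is linear and continuous in `u`, so for an atomic decomposition `u = ∑ c_j a_j` it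
suffices to show `|B_𝔱(a, v)| ≤ ‖v‖_{V^{p'}}` for a single atom `a = ∑_i χ_{[s_{i-1}, s_i)} φ_{i-1}`.
Grouping the terms of `B_𝔱(a, v)` by the atom interval containing `t_{k-1}`, each group telescopes
to an increment of `v` between the first points of `𝔱` at or after `s_{i-1}` and `s_i`. Hölder's
inequality bounds the result by `(∑ ‖φ_i‖^p)^{1/p} = 1` times the `p'`-variation of `v` along this
monotone chain of points of `𝔱`, which after discarding repeated points is the variation sum of a
partition.
-/

open Finset

theorem Monotone.exists_strictMono_sum_eq {α M : Type*} [LinearOrder α] [AddCommMonoid M]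
    {f : α → α → M} (hf : ∀ x, f x x = 0) {m : ℕ} {c : Fin (m + 1) → α} (hc : Monotone c) :
    ∃ (r : ℕ) (e : Fin (r + 1) → α), StrictMono e ∧ e 0 = c 0 ∧ e (Fin.last r) = c (Fin.last m) ∧
      ∑ j : Fin m, f (c j.castSucc) (c j.succ) = ∑ s : Fin r, f (e s.castSucc) (e s.succ) := by
  induction m with
  | zero => exact ⟨0, c, Fin.strictMono_iff_lt_succ.2 fun i => i.elim0, rfl, rfl, by simp⟩
  | succ m ih =>
    obtain ⟨r, e, he, he0, hel, hsum⟩ := ih (hc.comp Fin.strictMono_castSucc.monotone)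
    have hlast : c (Fin.last m).castSucc ≤ c (Fin.last (m + 1)) := hc (Fin.le_last _)
    rw [Fin.sum_univ_castSucc]
    simp only [Function.comp_apply, Fin.succ_castSucc, Fin.succ_last] at hsum he0 hel ⊢
    rw [hsum]
    rcases hlast.eq_or_lt with heq | hlt
    · exact ⟨r, e, he, he0, hel.trans heq, by rw [heq, hf, add_zero]⟩
    · have hsnoc : ∀ s : Fin r,
          Fin.snoc (α := fun _ => α) e (c (Fin.last (m + 1))) s.castSucc.succ = e s.succ :=
        fun s => by rw [Fin.succ_castSucc, Fin.snoc_castSucc]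
      refine ⟨r + 1, Fin.snoc e (c (Fin.last (m + 1))), ?_, by simpa using he0, by simp, ?_⟩
      · refine Fin.strictMono_iff_lt_succ.2 (Fin.lastCases ?_ fun s => ?_)
        · simpa [hel] using hlt
        · simpa [hsnoc] using he (Fin.castSucc_lt_succ (i := s))
      · simp [Fin.sum_univ_castSucc (n := r), hel, hsnoc]

theorem abs_le_tsum_abs_mul_of_hasSum {ι : Type*} {c b : ι → ℝ} {B M : ℝ}
    (hB : HasSum (fun j => c j * b j) B) (hc : Summable fun j => |c j|) (hb : ∀ j, |b j| ≤ M) :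
    |B| ≤ (∑' j, |c j|) * M :=
  hB.norm_le_of_bounded (hc.hasSum.mul_right M) fun j => by
    rw [Real.norm_eq_abs, abs_mul]
    exact mul_le_mul_of_nonneg_left (hb j) (abs_nonneg _)

namespace Ptn

instance : Nonempty Ptn :=
  ⟨⟨1, one_pos, fun i => ((i : ℕ) : ℝ),
    EReal.coe_strictMono.comp (Nat.strictMono_cast.comp Fin.val_strictMono), EReal.coe_ne_bot _⟩⟩

variable (P : Ptn)

theorem t_ne_bot (j : Fin (P.K + 1)) : P.t j ≠ ⊥ := fun h =>
  P.h0 (le_bot_iff.mp (h ▸ P.mono.monotone (Fin.zero_le j)))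

noncomputable def pt (n : ℕ) : EReal := P.t ⟨min n P.K, by omega⟩

theorem pt_val (j : Fin (P.K + 1)) : P.pt j = P.t j := by
  simp [pt, Nat.min_eq_left (Nat.lt_succ_iff.mp j.isLt)]

theorem pt_monotone : Monotone P.pt := fun _ _ h =>
  P.mono.monotone (Fin.mk_le_mk.mpr (min_le_min_right _ h))

theorem pt_ne_bot (n : ℕ) : P.pt n ≠ ⊥ := P.t_ne_bot _

theorem pt_ne_top {n : ℕ} (hn : n < P.K) : P.pt n ≠ ⊤ := by
  have : P.pt n < P.pt P.K := by
    simpa [pt, Nat.min_eq_left hn.le] using P.mono (Fin.mk_lt_mk.mpr hn)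
  exact this.ne_top

/-- `P.pt (P.idx x)` is the first point of `P` at or after `x`, or the last point if there is
none. -/
noncomputable def idx (x : EReal) : ℕ := #{k : Fin P.K | P.t k.castSucc < x}

theorem idx_le (x : EReal) : P.idx x ≤ P.K :=
  (card_filter_le _ _).trans (card_fin _).le

theorem idx_monotone : Monotone P.idx := fun _ _ h =>
  card_le_card fun k hk => by
    simp only [mem_filter, mem_univ, true_and] at hk ⊢
    exact hk.trans_le h

theorem lt_idx_iff {x : EReal} {k : ℕ} (hk : k < P.K) : k < P.idx x ↔ P.pt k < x := by
  have hpt : P.pt k = P.t (⟨k, hk⟩ : Fin P.K).castSucc := P.pt_val (Fin.castSucc ⟨k, hk⟩)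
  constructor
  · intro h
    by_contra hx
    refine (lt_irrefl k) (h.trans_le ?_)
    calc P.idx x ≤ #(Iio (⟨k, hk⟩ : Fin P.K)) := card_le_card fun j hj => by
          simp only [mem_filter, mem_univ, true_and] at hj
          rw [not_lt, hpt] at hx
          exact mem_Iio.mpr (P.mono.lt_iff_lt.mp (hj.trans_le hx))
      _ = k := Fin.card_Iio _
  · intro h
    calc k < #(Iic (⟨k, hk⟩ : Fin P.K)) := by rw [Fin.card_Iic]; exact k.lt_succ_self
      _ ≤ P.idx x := card_le_card fun j hj => by
          simp only [mem_filter, mem_univ, true_and]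
          rw [hpt] at h
          exact (P.mono.monotone (Fin.castSucc_le_castSucc_iff.mpr (mem_Iic.mp hj))).trans_lt h

theorem filter_range_eq_Ico (x y : EReal) :
    {k ∈ range P.K | x ≤ P.pt k ∧ P.pt k < y} = Ico (P.idx x) (P.idx y) := by
  ext k
  simp only [mem_filter, mem_range, mem_Ico]
  constructor
  · rintro ⟨hk, hx, hy⟩
    exact ⟨not_lt.mp fun h => ((P.lt_idx_iff hk).mp h).not_ge hx, (P.lt_idx_iff hk).mpr hy⟩
  · rintro ⟨hx, hy⟩
    have hk : k < P.K := hy.trans_le (P.idx_le y)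
    exact ⟨hk, not_lt.mp fun h => hx.not_gt ((P.lt_idx_iff hk).mpr h), (P.lt_idx_iff hk).mp hy⟩

end Ptn

section NormedAddCommGroup

variable {H : Type*} [NormedAddCommGroup H]

def IsStepFun (Q : Ptn) (φ : Fin Q.K → H) (a : ℝ → H) : Prop :=
  ∀ x : ℝ, a x = ∑ i : Fin Q.K,
    Set.indicator {y : ℝ | Q.t i.castSucc ≤ (y : EReal) ∧ (y : EReal) < Q.t i.succ}
      (fun _ => φ i) x

theorem evalE_coe (v : ℝ → H) (r : ℝ) : evalE v r = v r := by
  simp [evalE]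

theorem VpNorm_nonneg {q : ℝ} {v : ℝ → H} (hv : BddAbove {r | ∃ P : Ptn, r = VpSum q v P}) :
    0 ≤ VpNorm q v :=
  (Real.rpow_nonneg (sum_nonneg fun _ _ => Real.rpow_nonneg (norm_nonneg _) _) _).trans
    (le_csSup hv ⟨Classical.arbitrary Ptn, rfl⟩)

theorem rpow_sum_norm_sub_le_VpNorm {q : ℝ} (hq : 0 < q) {v : ℝ → H}
    (hv : BddAbove {r | ∃ P : Ptn, r = VpSum q v P}) {m : ℕ} {c : Fin (m + 1) → EReal}
    (hc : Monotone c) (hc0 : c 0 ≠ ⊥) :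
    (∑ j : Fin m, ‖evalE v (c j.succ) - evalE v (c j.castSucc)‖ ^ q) ^ (1 / q) ≤ VpNorm q v := by
  obtain ⟨r, e, he, he0, -, hsum⟩ := hc.exists_strictMono_sum_eq
    (f := fun x y => ‖evalE v y - evalE v x‖ ^ q) fun x => by simp [Real.zero_rpow hq.ne']
  rw [hsum]
  rcases Nat.eq_zero_or_pos r with rfl | hr
  · simpa [Real.zero_rpow (inv_pos.mpr hq).ne'] using VpNorm_nonneg hv
  · exact le_csSup hv ⟨⟨r, hr, e, he, he0 ▸ hc0⟩, rfl⟩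

theorem evalE_eq_sum_ite {a : ℝ → H} {Q : Ptn} {φ : Fin Q.K → H}
    (ha : IsStepFun Q φ a)
    {x : EReal} (hx_top : x ≠ ⊤) (hx_bot : x ≠ ⊥) :
    evalE a x = ∑ i : Fin Q.K, if Q.t i.castSucc ≤ x ∧ x < Q.t i.succ then φ i else 0 := by
  lift x to ℝ using ⟨hx_top, hx_bot⟩
  simp only [evalE_coe, ha x, Set.indicator_apply, Set.mem_ofPred_eq]

end NormedAddCommGroup

section InnerProductSpace

variable {H : Type*} [NormedAddCommGroup H] [InnerProductSpace ℝ H]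

theorem abs_sum_inner_le_Lp_mul_Lq {ι : Type*} (s : Finset ι) (x y : ι → H) {p q : ℝ}
    (hpq : p.HolderConjugate q) :
    |∑ i ∈ s, inner ℝ (x i) (y i)| ≤
      (∑ i ∈ s, ‖x i‖ ^ p) ^ (1 / p) * (∑ i ∈ s, ‖y i‖ ^ q) ^ (1 / q) :=
  calc |∑ i ∈ s, inner ℝ (x i) (y i)|
      ≤ ∑ i ∈ s, ‖x i‖ * ‖y i‖ :=
        (abs_sum_le_sum_abs _ _).trans (sum_le_sum fun i _ => abs_real_inner_le_norm _ _)
    _ ≤ _ := by simpa only [abs_norm] using Real.inner_le_Lp_mul_Lq s (‖x ·‖) (‖y ·‖) hpq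

theorem Bsum_eq_sum_range (u v : ℝ → H) (P : Ptn) :
    Bsum u v P = ∑ k ∈ range P.K,
      inner ℝ (evalE u (P.pt k)) (evalE v (P.pt (k + 1)) - evalE v (P.pt k)) := by
  rw [Bsum, ← Fin.sum_univ_eq_sum_range]
  refine sum_congr rfl fun k _ => ?_
  rw [← P.pt_val k.castSucc, ← P.pt_val k.succ, Fin.val_castSucc, Fin.val_succ]

theorem Bsum_eq_of_step {a : ℝ → H} {Q : Ptn} {φ : Fin Q.K → H}
    (ha : IsStepFun Q φ a)
    (v : ℝ → H) (P : Ptn) :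
    Bsum a v P = ∑ i : Fin Q.K, inner ℝ (φ i)
      (evalE v (P.pt (P.idx (Q.t i.succ))) - evalE v (P.pt (P.idx (Q.t i.castSucc)))) := by
  set w : ℕ → H := fun n => evalE v (P.pt n)
  calc Bsum a v P
      = ∑ k ∈ range P.K, ∑ i : Fin Q.K,
          if Q.t i.castSucc ≤ P.pt k ∧ P.pt k < Q.t i.succ then inner ℝ (φ i) (w (k + 1) - w k)
          else 0 := by
        rw [Bsum_eq_sum_range]
        refine sum_congr rfl fun k hk => ?_
        rw [evalE_eq_sum_ite ha (P.pt_ne_top (mem_range.mp hk)) (P.pt_ne_bot k), sum_inner]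
        exact sum_congr rfl fun i _ => by split_ifs <;> simp [w]
    _ = ∑ i : Fin Q.K, inner ℝ (φ i)
          (∑ k ∈ Ico (P.idx (Q.t i.castSucc)) (P.idx (Q.t i.succ)), (w (k + 1) - w k)) := by
        rw [sum_comm]
        refine sum_congr rfl fun i _ => ?_
        rw [← P.filter_range_eq_Ico, inner_sum, sum_filter]
    _ = _ := by
        refine sum_congr rfl fun i _ => ?_
        rw [sum_Ico_sub w (P.idx_monotone (Q.mono.monotone (Fin.castSucc_le_succ i)))]

theorem abs_Bsum_le_VpNorm_of_isUpAtom {p p' : ℝ} (hpq : p.HolderConjugate p') {a : ℝ → H}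
    (ha : IsUpAtom p a) {v : ℝ → H} (hv : BddAbove {r | ∃ P : Ptn, r = VpSum p' v P})
    (P : Ptn) : |Bsum a v P| ≤ VpNorm p' v := by
  obtain ⟨Q, φ, -, hφ, ha⟩ := ha
  set c : Fin (Q.K + 1) → EReal := fun j => P.pt (P.idx (Q.t j))
  have hc : Monotone c := P.pt_monotone.comp (P.idx_monotone.comp Q.mono.monotone)
  calc |Bsum a v P|
      ≤ (∑ i, ‖φ i‖ ^ p) ^ (1 / p) *
          (∑ i : Fin Q.K, ‖evalE v (c i.succ) - evalE v (c i.castSucc)‖ ^ p') ^ (1 / p') := by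
        rw [Bsum_eq_of_step ha]
        exact abs_sum_inner_le_Lp_mul_Lq _ _ _ hpq
    _ ≤ VpNorm p' v := by
        rw [hφ, Real.one_rpow, one_mul]
        exact rpow_sum_norm_sub_le_VpNorm hpq.symm.pos hv hc (P.pt_ne_bot _)

theorem hasSum_Bsum {u : ℝ → H} {c : ℕ → ℝ} {a : ℕ → ℝ → H}
    (hu : ∀ x, HasSum (fun j => c j • a j x) (u x)) (v : ℝ → H) (P : Ptn) :
    HasSum (fun j => c j * Bsum (a j) v P) (Bsum u v P) := by
  have hE : ∀ x : EReal, HasSum (fun j => c j • evalE (a j) x) (evalE u x) := fun x => by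
    unfold evalE
    split_ifs
    · simp
    · exact hu _
  simp only [Bsum, mul_sum]
  refine hasSum_sum fun k _ => ?_
  simpa only [innerSL_apply_apply, inner_smul_right,
    real_inner_comm (evalE v (P.t k.succ) - evalE v (P.t k.castSucc))] using
    (hE (P.t k.castSucc)).mapL
      (innerSL ℝ (evalE v (P.t k.succ) - evalE v (P.t k.castSucc)))

theorem abs_Bsum_le_of_upHasDecomp {p p' : ℝ} (hpq : p.HolderConjugate p') {u v : ℝ → H}
    {c : ℕ → ℝ} {a : ℕ → ℝ → H} (hd : UpHasDecomp p u c a)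
    (hv : BddAbove {r | ∃ P : Ptn, r = VpSum p' v P}) (P : Ptn) :
    |Bsum u v P| ≤ (∑' j, |c j|) * VpNorm p' v :=
  abs_le_tsum_abs_mul_of_hasSum (hasSum_Bsum hd.2.2 v P) hd.2.1 fun j =>
    abs_Bsum_le_VpNorm_of_isUpAtom hpq (hd.1 j) hv P

end InnerProductSpace

theorem Bsum_le_general (p p' : ℝ) (hp : 1 < p) (hpp' : 1 / p + 1 / p' = 1)
    {H : Type*} [NormedAddCommGroup H] [InnerProductSpace ℝ H]
    (u v : ℝ → H) (hu : MemUp p u) (hv : MemVp p' v) (P : Ptn) :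
    |Bsum u v P| ≤ UpNorm p u * VpNorm p' v := by
  have hpq : p.HolderConjugate p' :=
    Real.holderConjugate_iff.mpr ⟨hp, by simpa only [one_div] using hpp'⟩
  obtain ⟨c₀, a₀, h₀⟩ := hu
  rw [UpNorm, mul_comm, ← smul_eq_mul, ← Real.sInf_smul_of_nonneg (VpNorm_nonneg hv.2.2)]
  refine le_csInf ⟨_, _, ⟨c₀, a₀, h₀, rfl⟩, rfl⟩ ?_
  rintro _ ⟨_, ⟨c, a, hd, rfl⟩, rfl⟩
  exact (abs_Bsum_le_of_upHasDecomp hpq hd hv.2.2 P).trans_eq (mul_comm _ _)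

/-- For a finite partition `𝔱 ∈ 𝒵`, `u ∈ U^p` and `v ∈ V^{p'}` with
`1/p + 1/p' = 1`, the pairing `B_𝔱(u,v) = ∑_k ⟨u(t_{k−1}), v(t_k) − v(t_{k−1})⟩` satisfies
`|B_𝔱(u,v)| ≤ ‖u‖_{U^p} ‖v‖_{V^{p'}}`. -/
theorem Bsum_le (p p' : ℝ) (hp : 1 < p) (hpp' : 1 / p + 1 / p' = 1)
    {H : Type*} [NormedAddCommGroup H] [InnerProductSpace ℝ H] [CompleteSpace H]
    (u v : ℝ → H) (hu : MemUp p u) (hv : MemVp p' v) (P : Ptn) :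
    |Bsum u v P| ≤ UpNorm p u * VpNorm p' v :=
  Bsum_le_general p p' hp hpp' u v hu hv P
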